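/- Let Q be a finite quiver, let D = dA with d ≥ 2 and A ≥ 1, and let ρ be a set of paths of Q satisfying the (D,A)-overlap property. Let c be a closed path of length A with c^d ∈ ρ such that no element of ρ has the form c^{d-1}β or βc^{d-1} with β a path of length A distinct from c. Then c^d has no overlaps with any element of ρ∖{c^d}: no element of ρ other than c^d properly overlaps c^d, and c^d does not properly overlap any element of ρ other than c^d. -/
import Mathlib


open Quiver

universe u v

variable {V : Type u} [Quiver.{v + 1} V]

/-- The type of paths of a quiver, bundled with their endpoints. -/
abbrev SPath (V : Type u) [Quiver.{v + 1} V] := Σ a b : V, Quiver.Path a b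

/-- The type of arrows of a quiver, bundled with their endpoints. -/
abbrev SArrow (V : Type u) [Quiver.{v + 1} V] := Σ a b : V, a ⟶ b

/-- A set of paths in a quiver, given as a predicate on paths with arbitrary endpoints. -/
abbrev PathSet (V : Type u) [Quiver.{v + 1} V] := ∀ ⦃a b : V⦄, Quiver.Path a b → Prop

/-- `p` is a prefix of `q`. -/
def IsPrefixP {a b c : V} (p : Quiver.Path a b) (q : Quiver.Path a c) : Prop :=
  ∃ p' : Quiver.Path b c, q = p.comp p'

/-- `p` is a suffix of `q`. -/
def IsSuffixP {a b c : V} (p : Quiver.Path b c) (q : Quiver.Path a c) : Prop :=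
  ∃ p' : Quiver.Path a b, q = p'.comp p

/-- `p` is a subpath of `q`. -/
def IsSubpathP {b c a e : V} (p : Quiver.Path b c) (q : Quiver.Path a e) : Prop :=
  ∃ (u : Quiver.Path a b) (v : Quiver.Path c e), q = (u.comp p).comp v

/-- `q` overlaps `p` with overlap `p.comp u`: there are paths `u`, `v` with
`pu = vq` and `1 ≤ ℓ(u) < ℓ(q)`. -/
def OverlapsWith {x y a b : V} (q : Quiver.Path x y) (p : Quiver.Path a b)
    (u : Quiver.Path b y) : Prop :=
  ∃ v : Quiver.Path a x, p.comp u = v.comp q ∧ 1 ≤ u.length ∧ u.length < q.length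

/-- `q` properly overlaps `p` with overlap `p.comp u`: additionally `ℓ(v) ≥ 1`. -/
def ProperlyOverlapsWith {x y a b : V} (q : Quiver.Path x y) (p : Quiver.Path a b)
    (u : Quiver.Path b y) : Prop :=
  ∃ v : Quiver.Path a x, p.comp u = v.comp q ∧ 1 ≤ u.length ∧ u.length < q.length ∧
    1 ≤ v.length

/-- `q` properly overlaps `p` (with some overlap). -/
def ProperlyOverlaps {x y a b : V} (q : Quiver.Path x y) (p : Quiver.Path a b) : Prop :=
  ∃ u : Quiver.Path b y, ProperlyOverlapsWith q p u

/-- `ρ` is `d`-covering: whenever `pq ∈ ρ`, `qr ∈ ρ` and `ℓ(q) ≥ 1`, every subpath of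
`pqr` of length `d` lies in `ρ`. -/
def DCovering (d : ℕ) (ρ : PathSet V) : Prop :=
  ∀ ⦃a b c e : V⦄ (p : Quiver.Path a b) (q : Quiver.Path b c) (r : Quiver.Path c e),
    ρ (p.comp q) → ρ (q.comp r) → 1 ≤ q.length →
    ∀ ⦃x y : V⦄ (s : Quiver.Path x y), s.length = d →
      IsSubpathP s ((p.comp q).comp r) → ρ s

/-- The sets `R^n` of (iterated maximal) overlaps: `R^0` = trivial paths, `R^1` = arrows,
`R^2 = ρ`, and for `n ≥ 3`, `R^n` consists of the paths `R^{n-1}u` where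
`R^{n-1} = R^{n-2}p ∈ R^{n-1}`, some element of `ρ` overlaps `p` with overlap `pu`,
and no element of `ρ` overlaps `p` with overlap a proper prefix of `pu`. -/
def RSet (ρ : PathSet V) : ℕ → PathSet V
  | 0 => fun _ _ p => p.length = 0
  | 1 => fun _ _ p => p.length = 1
  | 2 => ρ
  | n + 3 => fun a e R =>
      ∃ (c : V) (Rp : Quiver.Path a c) (u : Quiver.Path c e),
        RSet ρ (n + 2) Rp ∧ R = Rp.comp u ∧
        ∃ (b : V) (Rpp : Quiver.Path a b) (p : Quiver.Path b c),
          RSet ρ (n + 1) Rpp ∧ Rp = Rpp.comp p ∧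
          (∃ (x : V) (q : Quiver.Path x e), ρ q ∧ OverlapsWith q p u) ∧
          ∀ (x y : V) (q : Quiver.Path x y) (u' : Quiver.Path c y),
            ρ q → OverlapsWith q p u' →
            ¬(IsPrefixP (p.comp u') (p.comp u) ∧ u'.length < u.length)

/-- `δ(n) = (n/2)d` if `n` is even, `((n-1)/2)d + 1` if `n` is odd. -/
def deltaF (d n : ℕ) : ℕ := if n % 2 = 0 then n / 2 * d else (n - 1) / 2 * d + 1

/-- The `m`-th power of a closed path. -/
def cpow {a : V} (T : Quiver.Path a a) : ℕ → Quiver.Path a a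
  | 0 => Quiver.Path.nil
  | n + 1 => (cpow T n).comp T

/-- The list of arrows of a path, in order. -/
def arrowList {a : V} : ∀ {b : V}, Quiver.Path a b → List (SArrow V)
  | _, Quiver.Path.nil => []
  | _, Quiver.Path.cons p e => arrowList p ++ [⟨_, _, e⟩]

/-- A closed trail: a nontrivial closed path with pairwise distinct arrows. -/
def IsClosedTrail {a : V} (T : Quiver.Path a a) : Prop :=
  1 ≤ T.length ∧ (arrowList T).Nodup

/-- `q` lies on the closed path `T`: `q` is a subpath of `T^m` for some `m ≥ 1`. -/
def LiesOn {x y a : V} (q : Quiver.Path x y) (T : Quiver.Path a a) : Prop :=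
  ∃ m : ℕ, 1 ≤ m ∧ IsSubpathP q (cpow T m)

/-- `ρ_T ⊆ ρ`: every path of length `d` lying on `T` belongs to `ρ`. -/
def RhoTSub (d : ℕ) (ρ : PathSet V) {a : V} (T : Quiver.Path a a) : Prop :=
  ∀ ⦃x y : V⦄ (q : Quiver.Path x y), q.length = d → LiesOn q T → ρ q

/-- `SegChain A L a b p` : the path `p` decomposes as the composite of the listed
segments, each of length `A`. -/
inductive SegChain (A : ℕ) : List (SPath V) → (a b : V) → Quiver.Path a b → Prop
  | nil (a : V) : SegChain A [] a a Quiver.Path.nil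
  | cons {a b c : V} (α : Quiver.Path a b) (hα : α.length = A) {p : Quiver.Path b c}
      {L : List (SPath V)} (hp : SegChain A L b c p) :
      SegChain A (⟨a, b, α⟩ :: L) a c (α.comp p)

/-- An `A`-path: a path which decomposes into segments of length `A`. -/
def IsAPath (A : ℕ) {a b : V} (p : Quiver.Path a b) : Prop :=
  ∃ L : List (SPath V), SegChain A L a b p

/-- `p` is an `A`-subpath of `q`: a subpath which is an `A`-path starting at a position
that is a multiple of `A`. -/
def IsASubpath (A : ℕ) {b c a e : V} (p : Quiver.Path b c) (q : Quiver.Path a e) : Prop :=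
  ∃ (u : Quiver.Path a b) (v : Quiver.Path c e),
    q = (u.comp p).comp v ∧ A ∣ u.length ∧ IsAPath A p

/-- A closed `A`-trail: a nontrivial closed `A`-path with pairwise distinct `A`-segments. -/
def IsClosedATrail (A : ℕ) {a : V} (T : Quiver.Path a a) : Prop :=
  ∃ L : List (SPath V), SegChain A L a a T ∧ L ≠ [] ∧ L.Nodup

/-- The `A`-path `q` lies on the closed `A`-path `T`: `q` is an `A`-subpath of `T^m` for
some `m ≥ 1`. -/
def ALiesOn (A : ℕ) {x y a : V} (q : Quiver.Path x y) (T : Quiver.Path a a) : Prop :=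
  ∃ m : ℕ, 1 ≤ m ∧ IsASubpath A q (cpow T m)

/-- `ρ_T ⊆ ρ` in the `(D,A)`-setting: every path of length `D` which lies on `T` as an
`A`-path belongs to `ρ`. -/
def ARhoTSub (D A : ℕ) (ρ : PathSet V) {a : V} (T : Quiver.Path a a) : Prop :=
  ∀ ⦃x y : V⦄ (q : Quiver.Path x y), q.length = D → ALiesOn A q T → ρ q

/-- The `(D,A)`-overlap property: every path in `ρ` has length `D`, and whenever
`R₂ ∈ ρ` properly overlaps `R₁ ∈ ρ` with overlap `R₁u`, then `ℓ(u) ≥ A` and some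
`R₃ ∈ ρ` properly overlaps `R₁` with overlap `R₁u'` where `ℓ(u') = A` and `u'` is a
prefix of `u`. -/
def DAOverlapProperty (D A : ℕ) (ρ : PathSet V) : Prop :=
  (∀ ⦃a b : V⦄ (p : Quiver.Path a b), ρ p → p.length = D) ∧
  ∀ ⦃a b x y : V⦄ (R₁ : Quiver.Path a b) (R₂ : Quiver.Path x y) (u : Quiver.Path b y),
    ρ R₁ → ρ R₂ → ProperlyOverlapsWith R₂ R₁ u →
    A ≤ u.length ∧
      ∃ (y' : V) (x' : V) (R₃ : Quiver.Path x' y') (u' : Quiver.Path b y'),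
        ρ R₃ ∧ ProperlyOverlapsWith R₃ R₁ u' ∧ u'.length = A ∧ IsPrefixP u' u

/-- Condition (C1), part (1), for a loop `α`. -/
def CondLoop (d : ℕ) (ρ : PathSet V) {v : V} (α : v ⟶ v) : Prop :=
  ρ (cpow (Quiver.Hom.toPath α) d) ∧
  (∀ ⦃w : V⦄ (β : v ⟶ w), (⟨v, w, β⟩ : SArrow V) ≠ ⟨v, v, α⟩ →
      ¬ ρ ((cpow (Quiver.Hom.toPath α) (d - 1)).comp (Quiver.Hom.toPath β))) ∧
  (∀ ⦃w : V⦄ (β : w ⟶ v), (⟨w, v, β⟩ : SArrow V) ≠ ⟨v, v, α⟩ →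
      ¬ ρ ((Quiver.Hom.toPath β).comp (cpow (Quiver.Hom.toPath α) (d - 1))))

/-- Condition (C1): (1) every loop `α` satisfies `α^d ∈ ρ` and no element of `ρ` has the
form `α^{d-1}β` or `βα^{d-1}` with `β` an arrow distinct from `α`; (2) for every closed
trail `T` with `ℓ(T) > 1` and `ρ_T ⊆ ρ`, no element of `ρ∖ρ_T` begins or ends with an
arrow of `T`. -/
def CondC1 (d : ℕ) (ρ : PathSet V) : Prop :=
  (∀ (v : V) (α : v ⟶ v), CondLoop d ρ α) ∧
  (∀ ⦃a : V⦄ (T : Quiver.Path a a), IsClosedTrail T → 1 < T.length → RhoTSub d ρ T →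
    ∀ ⦃x y : V⦄ (q : Quiver.Path x y), ρ q → ¬(q.length = d ∧ LiesOn q T) →
      (∀ ⦃w : V⦄ (e : x ⟶ w) (q' : Quiver.Path w y),
          q = (Quiver.Hom.toPath e).comp q' → (⟨x, w, e⟩ : SArrow V) ∉ arrowList T) ∧
      (∀ ⦃w : V⦄ (e : w ⟶ y) (q' : Quiver.Path x w),
          q = q'.comp (Quiver.Hom.toPath e) → (⟨w, y, e⟩ : SArrow V) ∉ arrowList T))

/-- Condition (C2): (1) for every `A`-loop `c`, some rotation `c'` of `c` satisfies
`c'^d ∈ ρ` and no element of `ρ` has the form `c'^{d-1}β` or `βc'^{d-1}` with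
`β` a path of length `A` distinct from `c'`; (2) for every closed `A`-trail `T` with at
least two segments and `ρ_T ⊆ ρ`, no element of `ρ∖ρ_T` begins or ends with an
`A`-segment of `T`. -/
def CondC2 (D A d : ℕ) (ρ : PathSet V) : Prop :=
  (∀ ⦃v : V⦄ (c : Quiver.Path v v), c.length = A →
    ∃ (w : V) (p : Quiver.Path v w) (q : Quiver.Path w v), c = p.comp q ∧ p.length < A ∧
      ρ (cpow (q.comp p) d) ∧
      (∀ ⦃x : V⦄ (β : Quiver.Path w x), β.length = A →
          (⟨w, x, β⟩ : SPath V) ≠ ⟨w, w, q.comp p⟩ →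
          ¬ ρ ((cpow (q.comp p) (d - 1)).comp β)) ∧
      (∀ ⦃x : V⦄ (β : Quiver.Path x w), β.length = A →
          (⟨x, w, β⟩ : SPath V) ≠ ⟨w, w, q.comp p⟩ →
          ¬ ρ (β.comp (cpow (q.comp p) (d - 1))))) ∧
  (∀ ⦃a : V⦄ (T : Quiver.Path a a) (L : List (SPath V)),
      SegChain A L a a T → L.Nodup → 2 ≤ L.length → ARhoTSub D A ρ T →
      ∀ ⦃x y : V⦄ (q : Quiver.Path x y), ρ q → ¬(q.length = D ∧ ALiesOn A q T) →
        (∀ ⦃w : V⦄ (α : Quiver.Path x w) (q' : Quiver.Path w y),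
            q = α.comp q' → (⟨x, w, α⟩ : SPath V) ∉ L) ∧
        (∀ ⦃w : V⦄ (α : Quiver.Path w y) (q' : Quiver.Path x w),
            q = q'.comp α → (⟨w, y, α⟩ : SPath V) ∉ L))


section AuxStmt14

lemma split_le' {a b₁ b₂ : V} (p₁ : Quiver.Path a b₁) (p₂ : Quiver.Path a b₂) :
    ∀ {e : V} (q₂ : Quiver.Path b₂ e) (q₁ : Quiver.Path b₁ e),
      p₁.comp q₁ = p₂.comp q₂ → p₁.length ≤ p₂.length →
      ∃ w : Quiver.Path b₁ b₂, p₂ = p₁.comp w ∧ q₁ = w.comp q₂ := by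
  intro e q₂
  induction q₂ with
  | nil =>
    intro q₁ h _
    exact ⟨q₁, by simpa using h.symm, by simp⟩
  | cons r f ih =>
    intro q₁ h hle
    cases q₁ with
    | nil =>
      exfalso
      have := congrArg Quiver.Path.length h
      simp [Quiver.Path.length_comp] at this
      omega
    | cons s g =>
      rw [Quiver.Path.comp_cons, Quiver.Path.comp_cons] at h
      obtain rfl := Quiver.Path.obj_eq_of_cons_eq_cons h
      have h' : p₁.comp s = p₂.comp r := (Quiver.Path.heq_of_cons_eq_cons h).eq
      have hg : g = f := (Quiver.Path.hom_heq_of_cons_eq_cons h).eq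
      obtain ⟨w, hw1, hw2⟩ := ih s h' hle
      exact ⟨w, hw1, by rw [Quiver.Path.comp_cons, ← hw2, hg]⟩

lemma split_eq' {a b₁ b₂ e : V} (p₁ : Quiver.Path a b₁) (p₂ : Quiver.Path a b₂)
    (q₁ : Quiver.Path b₁ e) (q₂ : Quiver.Path b₂ e)
    (h : p₁.comp q₁ = p₂.comp q₂) (hl : p₁.length = p₂.length) :
    b₁ = b₂ ∧ HEq p₁ p₂ ∧ HEq q₁ q₂ := by
  obtain ⟨w, hw1, hw2⟩ := split_le' p₁ p₂ q₂ q₁ h hl.le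
  have hw0 : w.length = 0 := by
    have := congrArg Quiver.Path.length hw1
    simp [Quiver.Path.length_comp] at this
    omega
  cases w with
  | nil => exact ⟨rfl, heq_of_eq (by simpa using hw1.symm), heq_of_eq (by simpa using hw2)⟩
  | cons => simp at hw0

lemma spath_mk_inj {a b a' b' : V} {p : Quiver.Path a b} {p' : Quiver.Path a' b'}
    (h : (⟨a, b, p⟩ : SPath V) = ⟨a', b', p'⟩) : a = a' ∧ b = b' ∧ HEq p p' := by
  obtain ⟨h1, h2⟩ := Sigma.mk.inj_iff.mp h
  subst h1
  obtain ⟨h3, h4⟩ := Sigma.mk.inj_iff.mp (eq_of_heq h2)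
  exact ⟨rfl, h3, h4⟩

lemma cpow_length {a : V} (T : Quiver.Path a a) : ∀ n, (cpow T n).length = n * T.length
  | 0 => by simp [cpow]
  | n + 1 => by simp [cpow, Quiver.Path.length_comp, cpow_length T n, Nat.succ_mul]

lemma cpow_comm {a : V} (T : Quiver.Path a a) (n : ℕ) :
    (cpow T n).comp T = T.comp (cpow T n) := by
  induction n with
  | zero =>
    show (Quiver.Path.nil : Quiver.Path a a).comp T = T.comp Quiver.Path.nil
    simp
  | succ n ih =>
    show ((cpow T n).comp T).comp T = T.comp ((cpow T n).comp T)
    calc ((cpow T n).comp T).comp T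
        = (T.comp (cpow T n)).comp T := by rw [ih]
      _ = T.comp ((cpow T n).comp T) := Quiver.Path.comp_assoc T (cpow T n) T

lemma cpow_pred {a : V} (T : Quiver.Path a a) {d : ℕ} (hd : 1 ≤ d) :
    (cpow T (d - 1)).comp T = cpow T d := by
  cases d with
  | zero => omega
  | succ n => rfl

lemma cpow_pred' {a : V} (T : Quiver.Path a a) {d : ℕ} (hd : 1 ≤ d) :
    T.comp (cpow T (d - 1)) = cpow T d := by
  rw [← cpow_comm, cpow_pred T hd]

variable (D A d : ℕ) (ρ : PathSet V) {u : V} (c : Quiver.Path u u)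

lemma case1_aux (hd : 2 ≤ d) (hA : 1 ≤ A) (hD : D = d * A)
    (hDA : DAOverlapProperty D A ρ) (hc : c.length = A) (hcd : ρ (cpow c d))
    (h1 : ∀ ⦃w : V⦄ (β : Quiver.Path u w), β.length = A →
      (⟨u, w, β⟩ : SPath V) ≠ ⟨u, u, c⟩ → ¬ ρ ((cpow c (d - 1)).comp β)) :
    ∀ (n : ℕ) {x y : V} (q : Quiver.Path x y), ρ q → ∀ (u₀ : Quiver.Path u y),
      u₀.length = n → ProperlyOverlapsWith q (cpow c d) u₀ →
      (⟨x, y, q⟩ : SPath V) = ⟨u, u, cpow c d⟩ := by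
  have hcdD : (cpow c d).length = D := by rw [cpow_length, hc, hD]
  intro n
  induction n using Nat.strong_induction_on with
  | _ n IH =>
  intro x y q hq u₀ hlen hPO
  obtain ⟨v₀, heq, hu1, hu2, hv1⟩ := hPO
  have hqD : q.length = D := hDA.1 q hq
  obtain ⟨hAu, y', x', R₃, u', hR₃, hPO', hu'A, w, hwpre⟩ :=
    hDA.2 (cpow c d) q u₀ hcd hq ⟨v₀, heq, hu1, hu2, hv1⟩
  obtain ⟨v', heq', -, -, -⟩ := hPO'
  have hR₃D : R₃.length = D := hDA.1 R₃ hR₃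
  have hv'A : v'.length = A := by
    have := congrArg Quiver.Path.length heq'
    simp only [Quiver.Path.length_comp] at this
    omega
  have hsplit : c.comp ((cpow c (d - 1)).comp u') = v'.comp R₃ := by
    rw [← Quiver.Path.comp_assoc, cpow_pred' c (by omega)]
    exact heq'
  obtain ⟨hux', hpv, hqv⟩ := split_eq' c v' _ R₃ hsplit (by rw [hc, hv'A])
  subst x'
  have hR₃eq : (cpow c (d - 1)).comp u' = R₃ := hqv.eq
  have hu'c : (⟨u, y', u'⟩ : SPath V) = ⟨u, u, c⟩ := by
    by_contra hne
    exact h1 u' hu'A hne (hR₃eq ▸ hR₃)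
  obtain ⟨-, hy'u, hu'c2⟩ := spath_mk_inj hu'c
  subst y'
  have hu'e : u' = c := hu'c2.eq
  subst u'
  obtain rfl : u₀ = c.comp w := hwpre
  have hwlen : A + w.length = n := by simpa [hc] using hlen
  have hv₀n : v₀.length = n := by
    have := congrArg Quiver.Path.length heq
    simp only [Quiver.Path.length_comp, Quiver.Path.length_cons] at this
    omega
  have hu₀q : (c.comp w).length < q.length := hu2
  simp only [Quiver.Path.length_comp] at hu₀q
  by_cases hw0 : w.length = 0
  · have hyu : u = y := Quiver.Path.eq_of_length_zero w hw0
    subst y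
    obtain rfl : w = Quiver.Path.nil := Quiver.Path.eq_nil_of_length_zero w hw0
    have heq2 : c.comp (cpow c d) = v₀.comp q := by
      rw [← cpow_comm]
      simpa using heq
    obtain ⟨hxu, -, hqeq⟩ := split_eq' c v₀ (cpow c d) q heq2 (by omega)
    subst x
    obtain rfl : cpow c d = q := hqeq.eq
    rfl
  · have heq2 : c.comp ((cpow c d).comp w) = v₀.comp q := by
      rw [← Quiver.Path.comp_assoc, ← cpow_comm, Quiver.Path.comp_assoc]
      exact heq
    obtain ⟨v₂, hv₂1, hv₂2⟩ := split_le' c v₀ q ((cpow c d).comp w) heq2 (by omega)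
    have hv₂len : v₂.length = n - A := by
      have := congrArg Quiver.Path.length hv₂1
      simp only [Quiver.Path.length_comp] at this
      omega
    exact IH w.length (by omega) q hq w rfl
      ⟨v₂, hv₂2, by omega, by omega, by omega⟩

lemma case2_aux (hd : 2 ≤ d) (hA : 1 ≤ A) (hD : D = d * A)
    (hDA : DAOverlapProperty D A ρ) (hc : c.length = A) (hcd : ρ (cpow c d))
    (h2 : ∀ ⦃w : V⦄ (β : Quiver.Path w u), β.length = A →
      (⟨w, u, β⟩ : SPath V) ≠ ⟨u, u, c⟩ → ¬ ρ (β.comp (cpow c (d - 1)))) :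
    ∀ (n : ℕ) {x y : V} (q : Quiver.Path x y), ρ q → ∀ (u₀ : Quiver.Path y u),
      u₀.length = n → ProperlyOverlapsWith (cpow c d) q u₀ →
      (⟨x, y, q⟩ : SPath V) = ⟨u, u, cpow c d⟩ := by
  have hcdD : (cpow c d).length = D := by rw [cpow_length, hc, hD]
  have hcd1D : (cpow c (d - 1)).length = (d - 1) * A := by rw [cpow_length, hc]
  have hDsplit : A + (d - 1) * A = D := by
    rw [hD]
    cases d with
    | zero => omega
    | succ k =>
      simp only [Nat.add_sub_cancel]
      rw [Nat.succ_mul]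
      omega
  intro n
  induction n using Nat.strong_induction_on with
  | _ n IH =>
  intro x y q hq u₀ hlen hPO
  obtain ⟨v₀, heq, hu1, hu2, hv1⟩ := hPO
  have hqD : q.length = D := hDA.1 q hq
  rw [hcdD] at hu2
  obtain ⟨hAu, y', x', R₃, u', hR₃, hPO', hu'A, w, hwpre⟩ :=
    hDA.2 q (cpow c d) u₀ hq hcd ⟨v₀, heq, hu1, by rw [hcdD]; exact hu2, hv1⟩
  obtain ⟨v', heq', -, -, -⟩ := hPO'
  have hR₃D : R₃.length = D := hDA.1 R₃ hR₃
  have hv'A : v'.length = A := by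
    have := congrArg Quiver.Path.length heq'
    simp only [Quiver.Path.length_comp] at this
    omega
  obtain ⟨q₃, hq₃1, hq₃2⟩ := split_le' v' q u' R₃ heq'.symm (by omega)
  have hq₃len : q₃.length = D - A := by
    have := congrArg Quiver.Path.length hq₃1
    simp only [Quiver.Path.length_comp] at this
    omega
  have hwlen : A + w.length = n := by
    have := congrArg Quiver.Path.length hwpre
    simp only [Quiver.Path.length_comp] at this
    omega
  have hv₀n : v₀.length = n := by
    have := congrArg Quiver.Path.length heq
    simp only [Quiver.Path.length_comp] at this
    omega
  by_cases hw0 : w.length = 0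
  · have hy'u : y' = u := Quiver.Path.eq_of_length_zero w hw0
    subst y'
    obtain rfl : w = Quiver.Path.nil := Quiver.Path.eq_nil_of_length_zero w hw0
    obtain rfl : u₀ = u' := by simpa using hwpre
    have heq2 : q.comp u₀ = (v₀.comp (cpow c (d - 1))).comp c := by
      rw [Quiver.Path.comp_assoc, cpow_pred c (by omega)]
      exact heq
    obtain ⟨hyu, hqeq, -⟩ := split_eq' q (v₀.comp (cpow c (d - 1))) u₀ c heq2
      (by simp only [Quiver.Path.length_comp, hcd1D, hqD]; omega)
    subst y
    have hqeq' : q = v₀.comp (cpow c (d - 1)) := hqeq.eq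
    have hv₀c : (⟨x, u, v₀⟩ : SPath V) = ⟨u, u, c⟩ := by
      by_contra hne
      exact h2 v₀ (by omega) hne (hqeq' ▸ hq)
    obtain ⟨hxu, -, hv₀c2⟩ := spath_mk_inj hv₀c
    subst x
    have hv₀e : v₀ = c := hv₀c2.eq
    subst v₀
    rw [hqeq', cpow_pred' c (by omega)]
  · have heq2 : v'.comp (q₃.comp u₀) = v₀.comp (cpow c d) := by
      rw [← Quiver.Path.comp_assoc, ← hq₃1]
      exact heq
    obtain ⟨v₂, hv₂1, hv₂2⟩ := split_le' v' v₀ (cpow c d) (q₃.comp u₀) heq2 (by omega)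
    have hv₂len : v₂.length = n - A := by
      have := congrArg Quiver.Path.length hv₂1
      simp only [Quiver.Path.length_comp] at this
      omega
    have hR₃w : R₃.comp w = v₂.comp (cpow c d) := by
      rw [hq₃2, Quiver.Path.comp_assoc, ← hwpre]
      exact hv₂2
    have hkey := IH w.length (by omega) R₃ hR₃ w rfl
      ⟨v₂, hR₃w, by omega, by rw [hcdD]; omega, by omega⟩
    obtain ⟨hx'u, hy'u, hR₃c⟩ := spath_mk_inj hkey
    subst x'
    subst y'
    have hR₃c' : R₃ = cpow c d := hR₃c.eq
    have hsplit2 : q₃.comp u' = (cpow c (d - 1)).comp c :=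
      hq₃2.symm.trans (hR₃c'.trans (cpow_pred c (by omega)).symm)
    obtain ⟨hyu, hq₃c, -⟩ := split_eq' q₃ (cpow c (d - 1)) u' c hsplit2 (by omega)
    subst y
    have hq₃c' : q₃ = cpow c (d - 1) := hq₃c.eq
    have hqv' : q = v'.comp (cpow c (d - 1)) := by rw [hq₃1, hq₃c']
    have hv'c : (⟨x, u, v'⟩ : SPath V) = ⟨u, u, c⟩ := by
      by_contra hne
      exact h2 v' hv'A hne (hqv' ▸ hq)
    obtain ⟨hxu, -, hv'c2⟩ := spath_mk_inj hv'c
    subst x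
    have hv'e : v' = c := hv'c2.eq
    subst v'
    rw [hqv', cpow_pred' c (by omega)]

end AuxStmt14

/-- if `c` is a closed path of length `A` with `c^d ∈ ρ` and no element of
`ρ` has the form `c^{d-1}β` or `βc^{d-1}` with `β` a path of length `A` distinct from
`c`, then `c^d` has no overlaps with any element of `ρ∖{c^d}`. -/
theorem stmt_14 {V : Type u} [Quiver.{v + 1} V] [Fintype V] [∀ a b : V, Fintype (a ⟶ b)]
    (D A d : ℕ) (hd : 2 ≤ d) (hA : 1 ≤ A) (hD : D = d * A)
    (ρ : PathSet V) (hDA : DAOverlapProperty D A ρ)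
    {u : V} (c : Quiver.Path u u) (hc : c.length = A)
    (hcd : ρ (cpow c d))
    (h1 : ∀ ⦃w : V⦄ (β : Quiver.Path u w), β.length = A →
      (⟨u, w, β⟩ : SPath V) ≠ ⟨u, u, c⟩ → ¬ ρ ((cpow c (d - 1)).comp β))
    (h2 : ∀ ⦃w : V⦄ (β : Quiver.Path w u), β.length = A →
      (⟨w, u, β⟩ : SPath V) ≠ ⟨u, u, c⟩ → ¬ ρ (β.comp (cpow c (d - 1)))) :
    ∀ ⦃x y : V⦄ (q : Quiver.Path x y), ρ q →
      (⟨x, y, q⟩ : SPath V) ≠ ⟨u, u, cpow c d⟩ →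
      ¬ ProperlyOverlaps q (cpow c d) ∧ ¬ ProperlyOverlaps (cpow c d) q := by
  intro x y q hq hne
  constructor
  · rintro ⟨u₀, hPO⟩
    exact hne (case1_aux D A d ρ c hd hA hD hDA hc hcd h1 u₀.length q hq u₀ rfl hPO)
  · rintro ⟨u₀, hPO⟩
    exact hne (case2_aux D A d ρ c hd hA hD hDA hc hcd h2 u₀.length q hq u₀ rfl hPO)
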